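/- Let T_1, T_2 be π-increasing trees with disjoint vertex sets, with maximum vertices m_1 and m_2, both irreducible, and v_2 a vertex of T_2 with v_2 < m_1 < m_2. Then T = splice(T_1, m_1; T_2, v_2) is irreducible, i.e., the m_2-dependence graph of T is connected. -/

import Mathlib

open scoped Classical

/-- An unordered increasing tree on a finite set of positive integers,
given by its vertex set and parent function: the root is the minimum vertex
and is fixed by `parent`, and every nonroot vertex has a parent in the tree
with strictly smaller label (so labels increase away from the root). -/
structure ITree : Type where
  verts : Finset ℕ
  parent : ℕ → ℕ
  pos : ∀ v ∈ verts, 0 < v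
  parent_root : ∀ v ∈ verts, (∀ u ∈ verts, v ≤ u) → parent v = v
  parent_lt : ∀ v ∈ verts, ¬(∀ u ∈ verts, v ≤ u) → parent v ∈ verts ∧ parent v < v

/-- `a` is an ancestor of `v` in `T` (this includes `a = v`): some iterate of
the parent function sends `v` to `a`. -/
def Ancestor (T : ITree) (a v : ℕ) : Prop := ∃ k : ℕ, T.parent^[k] v = a

/-- The chain from the root of `T` to `v`: the set of ancestors of `v`. -/
noncomputable def chain (T : ITree) (v : ℕ) : Finset ℕ :=
  T.verts.filter (fun a => Ancestor T a v)

/-- The number of sons of the vertex `i` in `T`. -/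
noncomputable def sons (T : ITree) (i : ℕ) : ℕ :=
  (T.verts.filter (fun v => v ≠ i ∧ T.parent v = i)).card

/-- `R = splice(T₁, v₁; T₂, v₂)`: the increasing tree on the union of the
vertex sets obtained by merging the chain from the root of `T₁` to `v₁` with
the chain from the root of `T₂` to `v₂` into a single increasing chain
(each chain vertex having as parent its predecessor in the merged chain),
all other vertices keeping their parent.  This is exactly the interleaving of
the `v₁`-decomposition of `T₁` and the `v₂`-decomposition of `T₂` so that the
roots along the resulting chain increase. -/
def IsSplice (T₁ : ITree) (v₁ : ℕ) (T₂ : ITree) (v₂ : ℕ) (R : ITree) : Prop :=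
  R.verts = T₁.verts ∪ T₂.verts ∧
  (∀ w ∈ T₁.verts, w ∉ chain T₁ v₁ ∪ chain T₂ v₂ → R.parent w = T₁.parent w) ∧
  (∀ w ∈ T₂.verts, w ∉ chain T₁ v₁ ∪ chain T₂ v₂ → R.parent w = T₂.parent w) ∧
  (∀ w ∈ chain T₁ v₁ ∪ chain T₂ v₂,
    ∀ h : ((chain T₁ v₁ ∪ chain T₂ v₂).filter (· < w)).Nonempty,
      R.parent w = ((chain T₁ v₁ ∪ chain T₂ v₂).filter (· < w)).max' h)

/-- `π` is a set partition of a set of positive integers: its blocks are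
nonempty, consist of positive integers, and are pairwise disjoint. -/
def IsPartition (π : Finset (Finset ℕ)) : Prop :=
  (∀ B ∈ π, B.Nonempty) ∧ (∀ B ∈ π, ∀ b ∈ B, 0 < b) ∧
    (∀ B ∈ π, ∀ B' ∈ π, B ≠ B' → Disjoint B B')

/-- `T` is a `π`-increasing tree: its vertex set is a union of blocks of `π`,
and every block contained in the vertex set forms a chain of ancestors in `T`
(for `i < j` in the same block, `i` is an ancestor of `j`). -/
def PiIncreasing (π : Finset (Finset ℕ)) (T : ITree) : Prop :=
  (∀ v ∈ T.verts, ∃ B ∈ π, v ∈ B ∧ B ⊆ T.verts) ∧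
  (∀ B ∈ π, B ⊆ T.verts → ∀ i ∈ B, ∀ j ∈ B, i ≤ j → Ancestor T i j)

/-- The edge relation of the `v`-dependence graph `G_v(T)` (on the blocks of
`π` contained in `V(T)`): there is an edge from `B` to `B'` when the maximum
`μ` of `B` does not lie on the chain from the root of `T` to `v`, and the
piece of the `v`-decomposition of `T` containing `μ` (as a nonroot vertex) is
rooted at a vertex `a ∈ B'`; the root `a` of that piece is the largest
ancestor of `v` which is also an ancestor of `μ`. -/
def DepEdge (π : Finset (Finset ℕ)) (T : ITree) (v : ℕ) (B B' : Finset ℕ) : Prop :=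
  B ∈ π ∧ B' ∈ π ∧ B ⊆ T.verts ∧ B' ⊆ T.verts ∧
  ∃ hB : B.Nonempty, ¬ Ancestor T (B.max' hB) v ∧
    ∃ a ∈ B', Ancestor T a v ∧ Ancestor T a (B.max' hB) ∧
      ∀ w, Ancestor T w v → Ancestor T w (B.max' hB) → w ≤ a

/-- The `v`-dependence graph `G_v(T)` is connected: any two blocks of `π`
contained in `V(T)` are related by the equivalence closure of the edge
relation. -/
def DepConnected (π : Finset (Finset ℕ)) (T : ITree) (v : ℕ) : Prop :=
  ∀ B ∈ π, B ⊆ T.verts → ∀ B' ∈ π, B' ⊆ T.verts →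
    Relation.EqvGen (DepEdge π T v) B B'

/-!
In the splice `T` the `m₁`-chain of `T₁` and the `v₂`-chain of `T₂` merge into one increasing
spine, and ancestry between two vertices of the same `Tᵢ` is unchanged. Let `s` be the last
common ancestor of `m₂` and `v₂` in `T₂`. Every edge of `G_{m₂}(T₂)` remains an edge of
`G_{m₂}(T)`. An edge of `G_{m₁}(T₁)` whose root `a` satisfies `a < s` remains an edge; if `a > s`,
then in `T` the last common ancestor of `m₂` and any vertex above `a` is `s`, so both endpoints
get an edge to the block of `s`. Finally `m₁ > v₂ ≥ s`, so the block of `m₁` is joined to the block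
of `s`, which connects the part coming from `T₁` to the part coming from `T₂`.
-/

open Finset Relation

namespace Ancestor

variable {T : ITree} {a b c v x y : ℕ}

theorem refl (T : ITree) (v : ℕ) : Ancestor T v v := ⟨0, rfl⟩

theorem parent (T : ITree) (v : ℕ) : Ancestor T (T.parent v) v := ⟨1, rfl⟩

theorem trans (hab : Ancestor T a b) (hbc : Ancestor T b c) : Ancestor T a c := by
  obtain ⟨k, rfl⟩ := hab
  obtain ⟨j, rfl⟩ := hbc
  exact ⟨k + j, Function.iterate_add_apply _ _ _ _⟩

theorem mem_and_le (hv : v ∈ T.verts) (h : Ancestor T a v) : a ∈ T.verts ∧ a ≤ v := by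
  obtain ⟨k, rfl⟩ := h
  induction k with
  | zero => exact ⟨hv, le_rfl⟩
  | succ k ih =>
    rw [Function.iterate_succ_apply']
    by_cases hroot : ∀ u ∈ T.verts, T.parent^[k] v ≤ u
    · rwa [T.parent_root _ ih.1 hroot]
    · obtain ⟨hmem, hlt⟩ := T.parent_lt _ ih.1 hroot
      exact ⟨hmem, hlt.le.trans ih.2⟩

theorem mem (hv : v ∈ T.verts) (h : Ancestor T a v) : a ∈ T.verts := (h.mem_and_le hv).1

theorem le (hv : v ∈ T.verts) (h : Ancestor T a v) : a ≤ v := (h.mem_and_le hv).2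

theorem of_le (hv : v ∈ T.verts) (ha : Ancestor T a v) (hb : Ancestor T b v) (hab : a ≤ b) :
    Ancestor T a b := by
  obtain ⟨k, hk⟩ := ha
  obtain ⟨j, hj⟩ := hb
  rcases le_total j k with h | h
  · exact ⟨k - j, by rw [← hj, ← Function.iterate_add_apply, Nat.sub_add_cancel h, hk]⟩
  · have hba : Ancestor T b a :=
      ⟨j - k, by rw [← hk, ← Function.iterate_add_apply, Nat.sub_add_cancel h, hj]⟩
    obtain rfl : a = b := hab.antisymm (hba.le (Ancestor.mem hv ⟨k, hk⟩))
    exact refl T a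

theorem eq_or_parent (h : Ancestor T x y) : x = y ∨ Ancestor T x (T.parent y) := by
  obtain ⟨_ | k, rfl⟩ := h
  · exact Or.inl rfl
  · exact Or.inr ⟨k, (Function.iterate_succ_apply _ _ _).symm⟩

theorem eq_of_root (hy : y ∈ T.verts) (hroot : ∀ u ∈ T.verts, y ≤ u) (h : Ancestor T x y) :
    x = y :=
  (h.le hy).antisymm (hroot x (h.mem hy))

theorem induction {P : ℕ → ℕ → Prop} (refl : ∀ y, P y y)
    (step : ∀ x y, y ∈ T.verts → ¬(∀ u ∈ T.verts, y ≤ u) →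
      Ancestor T x (T.parent y) → P x (T.parent y) → P x y)
    (hy : y ∈ T.verts) (h : Ancestor T x y) : P x y := by
  induction y using Nat.strong_induction_on with
  | _ y ih =>
    by_cases hroot : ∀ u ∈ T.verts, y ≤ u
    · exact h.eq_of_root hy hroot ▸ refl y
    obtain ⟨hp, hlt⟩ := T.parent_lt y hy hroot
    rcases h.eq_or_parent with rfl | h'
    · exact refl x
    · exact step x y hy hroot h' (ih _ hlt hp h')

end Ancestor

theorem ancestor_of_root {T : ITree} {r y : ℕ} (hr : r ∈ T.verts) (hroot : ∀ u ∈ T.verts, r ≤ u)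
    (hy : y ∈ T.verts) : Ancestor T r y := by
  induction y using Nat.strong_induction_on with
  | _ y ih =>
    by_cases hyroot : ∀ u ∈ T.verts, y ≤ u
    · obtain rfl : r = y := (hroot y hy).antisymm (hyroot r hr)
      exact Ancestor.refl T r
    · obtain ⟨hp, hlt⟩ := T.parent_lt y hy hyroot
      exact (ih _ hlt hp).trans (Ancestor.parent T y)

def IsLCA (T : ITree) (v μ a : ℕ) : Prop :=
  Ancestor T a v ∧ Ancestor T a μ ∧ ∀ w, Ancestor T w v → Ancestor T w μ → w ≤ a

theorem exists_isLCA {T : ITree} {v μ : ℕ} (hv : v ∈ T.verts) (hμ : μ ∈ T.verts) :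
    ∃ a, IsLCA T v μ a := by
  set S := T.verts.filter (fun a => Ancestor T a v ∧ Ancestor T a μ)
  have hroot : ∀ u ∈ T.verts, T.verts.min' ⟨v, hv⟩ ≤ u := fun u hu => min'_le _ u hu
  have hS : S.Nonempty := ⟨_, mem_filter.2 ⟨min'_mem _ _,
    ancestor_of_root (min'_mem _ _) hroot hv, ancestor_of_root (min'_mem _ _) hroot hμ⟩⟩
  obtain ⟨-, hav, haμ⟩ := mem_filter.1 (S.max'_mem hS)
  exact ⟨S.max' hS, hav, haμ, fun w hwv hwμ => S.le_max' w (mem_filter.2 ⟨hwv.mem hv, hwv, hwμ⟩)⟩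

theorem PiIncreasing.subset_of_mem {π : Finset (Finset ℕ)} {T : ITree} {B : Finset ℕ} {b : ℕ}
    (hπ : IsPartition π) (hT : PiIncreasing π T) (hB : B ∈ π) (hb : b ∈ B)
    (hbT : b ∈ T.verts) : B ⊆ T.verts := by
  obtain ⟨B₀, hB₀, hbB₀, hB₀T⟩ := hT.1 b hbT
  by_cases hBB₀ : B = B₀
  · exact hBB₀ ▸ hB₀T
  · exact absurd hbB₀ (disjoint_left.1 (hπ.2.2 B hB B₀ hB₀ hBB₀) hb)

theorem IsPartition.subset_or_subset {π : Finset (Finset ℕ)} {T₁ T₂ : ITree} {B : Finset ℕ}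
    (hπ : IsPartition π) (h₁ : PiIncreasing π T₁) (h₂ : PiIncreasing π T₂) (hB : B ∈ π)
    (hBT : B ⊆ T₁.verts ∪ T₂.verts) : B ⊆ T₁.verts ∨ B ⊆ T₂.verts := by
  obtain ⟨b, hb⟩ := hπ.1 B hB
  rcases mem_union.1 (hBT hb) with hb₁ | hb₂
  exacts [Or.inl (h₁.subset_of_mem hπ hB hb hb₁), Or.inr (h₂.subset_of_mem hπ hB hb hb₂)]

theorem depConnected_of_eqvGen {π : Finset (Finset ℕ)} {T : ITree} {v : ℕ} {B₀ : Finset ℕ}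
    (h : ∀ B ∈ π, B ⊆ T.verts → EqvGen (DepEdge π T v) B B₀) : DepConnected π T v :=
  fun B hB hBT B' hB' hB'T => (h B hB hBT).trans _ _ _ (h B' hB' hB'T).symm

/-- The vertices that `splice(T₁, v₁; T₂, v₂)` merges into a single chain. -/
noncomputable def spine (T₁ : ITree) (v₁ : ℕ) (T₂ : ITree) (v₂ : ℕ) : Finset ℕ :=
  chain T₁ v₁ ∪ chain T₂ v₂

section Spine

variable {T₁ T₂ : ITree} {v₁ v₂ x : ℕ}

theorem spine_comm (T₁ : ITree) (v₁ : ℕ) (T₂ : ITree) (v₂ : ℕ) :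
    spine T₁ v₁ T₂ v₂ = spine T₂ v₂ T₁ v₁ :=
  union_comm _ _

theorem mem_spine_of_ancestor_left (hv₁ : v₁ ∈ T₁.verts) (hx : Ancestor T₁ x v₁) :
    x ∈ spine T₁ v₁ T₂ v₂ :=
  mem_union_left _ (mem_filter.2 ⟨hx.mem hv₁, hx⟩)

theorem mem_spine_of_ancestor_right (hv₂ : v₂ ∈ T₂.verts) (hx : Ancestor T₂ x v₂) :
    x ∈ spine T₁ v₁ T₂ v₂ :=
  spine_comm T₂ v₂ T₁ v₁ ▸ mem_spine_of_ancestor_left hv₂ hx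

theorem mem_spine_iff_left (hdisj : Disjoint T₁.verts T₂.verts) (hx : x ∈ T₁.verts) :
    x ∈ spine T₁ v₁ T₂ v₂ ↔ Ancestor T₁ x v₁ := by
  simp only [spine, chain, mem_union, mem_filter, hx, true_and]
  exact ⟨fun h => h.resolve_right fun h₂ => disjoint_left.1 hdisj hx h₂.1, Or.inl⟩

end Spine

namespace IsSplice

variable {π : Finset (Finset ℕ)} {T₁ T₂ T : ITree} {v₁ v₂ a c s u w x y μ : ℕ}
  {B B' Bs : Finset ℕ}

theorem symm (h : IsSplice T₁ v₁ T₂ v₂ T) : IsSplice T₂ v₂ T₁ v₁ T := by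
  obtain ⟨hverts, h₁, h₂, hspine⟩ := h
  rw [IsSplice, union_comm (chain T₂ v₂), union_comm T₂.verts]
  exact ⟨hverts, h₂, h₁, hspine⟩

theorem verts_subset_left (h : IsSplice T₁ v₁ T₂ v₂ T) : T₁.verts ⊆ T.verts :=
  h.1 ▸ subset_union_left

theorem spine_filter_nonempty (h : IsSplice T₁ v₁ T₂ v₂ T) (hv₁ : v₁ ∈ T₁.verts)
    (hv₂ : v₂ ∈ T₂.verts) (hroot : ¬∀ u ∈ T.verts, y ≤ u) :
    ((spine T₁ v₁ T₂ v₂).filter (· < y)).Nonempty := by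
  have root_mem {T' : ITree} {u v : ℕ} (hv : v ∈ T'.verts) (hu : u ∈ T'.verts) :
      T'.verts.min' ⟨u, hu⟩ ∈ chain T' v :=
    mem_filter.2 ⟨min'_mem _ _, ancestor_of_root (min'_mem _ _) (fun _ => min'_le _ _) hv⟩
  push Not at hroot
  obtain ⟨u, hu, huy⟩ := hroot
  rw [h.1] at hu
  rcases mem_union.1 hu with hu | hu
  · exact ⟨_, mem_filter.2 ⟨mem_union_left _ (root_mem hv₁ hu), (min'_le _ u hu).trans_lt huy⟩⟩
  · exact ⟨_, mem_filter.2 ⟨mem_union_right _ (root_mem hv₂ hu), (min'_le _ u hu).trans_lt huy⟩⟩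

theorem ancestor_of_mem_spine (h : IsSplice T₁ v₁ T₂ v₂ T) (hy : y ∈ spine T₁ v₁ T₂ v₂)
    (hc : c ∈ spine T₁ v₁ T₂ v₂) (hcy : c ≤ y) : Ancestor T c y := by
  induction y using Nat.strong_induction_on with
  | _ y ih =>
    rcases hcy.eq_or_lt with rfl | hlt
    · exact Ancestor.refl T c
    have hc' : c ∈ (spine T₁ v₁ T₂ v₂).filter (· < y) := mem_filter.2 ⟨hc, hlt⟩
    obtain ⟨hp, hpy⟩ := mem_filter.1 (max'_mem _ ⟨c, hc'⟩)
    have hparent : T.parent y = _ := h.2.2.2 y hy ⟨c, hc'⟩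
    exact (ih _ hpy hp (le_max' _ c hc')).trans (hparent ▸ Ancestor.parent T y)

theorem mem_spine_of_ancestor (h : IsSplice T₁ v₁ T₂ v₂ T) (hv₁ : v₁ ∈ T₁.verts)
    (hv₂ : v₂ ∈ T₂.verts) (hy : y ∈ spine T₁ v₁ T₂ v₂) (hxy : Ancestor T x y) :
    x ∈ spine T₁ v₁ T₂ v₂ := by
  have hspine : spine T₁ v₁ T₂ v₂ ⊆ T.verts :=
    h.1 ▸ union_subset_union (filter_subset _ _) (filter_subset _ _)
  obtain ⟨k, rfl⟩ := hxy
  induction k with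
  | zero => exact hy
  | succ k ih =>
    rw [Function.iterate_succ_apply']
    by_cases hroot : ∀ u ∈ T.verts, T.parent^[k] y ≤ u
    · rwa [T.parent_root _ (hspine ih) hroot]
    · have hne := h.spine_filter_nonempty hv₁ hv₂ hroot
      rw [h.2.2.2 _ ih hne]
      exact (mem_filter.1 (max'_mem _ hne)).1

theorem ancestor_of_ancestor_left (h : IsSplice T₁ v₁ T₂ v₂ T)
    (hdisj : Disjoint T₁.verts T₂.verts) (hy : y ∈ T₁.verts) (hxy : Ancestor T₁ x y) :
    Ancestor T x y := by
  refine Ancestor.induction (P := fun x y => Ancestor T x y) (Ancestor.refl T) ?_ hy hxy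
  intro x y hy hroot _ hxp
  obtain ⟨hp, hpy⟩ := T₁.parent_lt y hy hroot
  refine hxp.trans ?_
  by_cases hyC : y ∈ spine T₁ v₁ T₂ v₂
  · have hyv := (mem_spine_iff_left hdisj hy).1 hyC
    have hpC := (mem_spine_iff_left (v₁ := v₁) (v₂ := v₂) hdisj hp).2
      ((Ancestor.parent T₁ y).trans hyv)
    exact h.ancestor_of_mem_spine hyC hpC hpy.le
  · exact h.2.1 y hy hyC ▸ Ancestor.parent T y

theorem ancestor_cases_left (h : IsSplice T₁ v₁ T₂ v₂ T) (hdisj : Disjoint T₁.verts T₂.verts)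
    (hv₁ : v₁ ∈ T₁.verts) (hv₂ : v₂ ∈ T₂.verts) (hy : y ∈ T₁.verts) (hxy : Ancestor T x y) :
    Ancestor T₁ x y ∨
      x ∈ spine T₁ v₁ T₂ v₂ ∧ ∃ c, Ancestor T₁ c v₁ ∧ Ancestor T₁ c y ∧ x ≤ c := by
  refine Ancestor.induction (P := fun x y => y ∈ T₁.verts → Ancestor T₁ x y ∨
      x ∈ spine T₁ v₁ T₂ v₂ ∧ ∃ c, Ancestor T₁ c v₁ ∧ Ancestor T₁ c y ∧ x ≤ c)
    (fun y _ => Or.inl (Ancestor.refl T₁ y)) ?_ (h.verts_subset_left hy) hxy hy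
  intro x y hyT _ hxp ih hy
  have hxy : Ancestor T x y := hxp.trans (Ancestor.parent T y)
  by_cases hyC : y ∈ spine T₁ v₁ T₂ v₂
  · exact Or.inr ⟨h.mem_spine_of_ancestor hv₁ hv₂ hyC hxy, y,
      (mem_spine_iff_left hdisj hy).1 hyC, Ancestor.refl T₁ y, hxy.le hyT⟩
  have hroot : ¬∀ u ∈ T₁.verts, y ≤ u := fun hroot =>
    hyC ((mem_spine_iff_left hdisj hy).2 (ancestor_of_root hy hroot hv₁))
  have hpy := Ancestor.parent T₁ y
  rw [h.2.1 y hy hyC] at ih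
  rcases ih (T₁.parent_lt y hy hroot).1 with hx | ⟨hxC, c, hcv, hcp, hxc⟩
  · exact Or.inl (hx.trans hpy)
  · exact Or.inr ⟨hxC, c, hcv, hcp.trans hpy, hxc⟩

theorem ancestor_iff_left (h : IsSplice T₁ v₁ T₂ v₂ T) (hdisj : Disjoint T₁.verts T₂.verts)
    (hv₁ : v₁ ∈ T₁.verts) (hv₂ : v₂ ∈ T₂.verts) (hx : x ∈ T₁.verts) (hy : y ∈ T₁.verts) :
    Ancestor T x y ↔ Ancestor T₁ x y := by
  refine ⟨fun hxy => ?_, h.ancestor_of_ancestor_left hdisj hy⟩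
  rcases h.ancestor_cases_left hdisj hv₁ hv₂ hy hxy with hxy | ⟨hxC, c, hcv, hcy, hxc⟩
  · exact hxy
  · exact (Ancestor.of_le hv₁ ((mem_spine_iff_left hdisj hx).1 hxC) hcv hxc).trans hcy

theorem ancestor_cross (h : IsSplice T₁ v₁ T₂ v₂ T) (hdisj : Disjoint T₁.verts T₂.verts)
    (hv₁ : v₁ ∈ T₁.verts) (hv₂ : v₂ ∈ T₂.verts) (hx : x ∈ T₂.verts) (hy : y ∈ T₁.verts)
    (hxy : Ancestor T x y) :
    Ancestor T₂ x v₂ ∧ ∃ c, Ancestor T₁ c v₁ ∧ Ancestor T₁ c y ∧ x ≤ c := by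
  rcases h.ancestor_cases_left hdisj hv₁ hv₂ hy hxy with hxy | ⟨hxC, hc⟩
  · exact absurd hx (disjoint_left.1 hdisj (hxy.mem hy))
  · rw [spine_comm] at hxC
    exact ⟨(mem_spine_iff_left hdisj.symm hx).1 hxC, hc⟩

theorem isLCA_left (h : IsSplice T₁ v₁ T₂ v₂ T) (hdisj : Disjoint T₁.verts T₂.verts)
    (hv₁ : v₁ ∈ T₁.verts) (hv₂ : v₂ ∈ T₂.verts) (hx : x ∈ T₁.verts) (hy : y ∈ T₁.verts)
    (ha : IsLCA T₁ x y a) : IsLCA T x y a := by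
  refine ⟨h.ancestor_of_ancestor_left hdisj hx ha.1, h.ancestor_of_ancestor_left hdisj hy ha.2.1,
    fun w hwx hwy => ?_⟩
  have hw := hwx.mem (h.verts_subset_left hx)
  rw [h.1] at hw
  rcases mem_union.1 hw with hw | hw
  · exact ha.2.2 w ((h.ancestor_iff_left hdisj hv₁ hv₂ hw hx).1 hwx)
      ((h.ancestor_iff_left hdisj hv₁ hv₂ hw hy).1 hwy)
  obtain ⟨-, c, hcv, hcx, hwc⟩ := h.ancestor_cross hdisj hv₁ hv₂ hw hx hwx
  obtain ⟨-, c', hc'v, hc'y, hwc'⟩ := h.ancestor_cross hdisj hv₁ hv₂ hw hy hwy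
  rcases le_total c c' with hcc | hcc
  · exact hwc.trans (ha.2.2 c hcx ((Ancestor.of_le hv₁ hcv hc'v hcc).trans hc'y))
  · exact hwc'.trans (ha.2.2 c' ((Ancestor.of_le hv₁ hc'v hcv hcc).trans hcx) hc'y)

theorem exists_le_of_common_ancestor (h : IsSplice T₁ v₁ T₂ v₂ T)
    (hdisj : Disjoint T₁.verts T₂.verts) (hv₁ : v₁ ∈ T₁.verts) (hv₂ : v₂ ∈ T₂.verts)
    (hμ : μ ∈ T₁.verts) (hu : u ∈ T₂.verts)
    (hwμ : Ancestor T w μ) (hwu : Ancestor T w u) :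
    (∃ c, Ancestor T₁ c v₁ ∧ Ancestor T₁ c μ ∧ w ≤ c) ∧
      ∃ c, Ancestor T₂ c v₂ ∧ Ancestor T₂ c u ∧ w ≤ c := by
  have hw := hwμ.mem (h.verts_subset_left hμ)
  rw [h.1] at hw
  rcases mem_union.1 hw with hw | hw
  · obtain ⟨hwv, hc⟩ := h.symm.ancestor_cross hdisj.symm hv₂ hv₁ hw hu hwu
    exact ⟨⟨w, hwv, (h.ancestor_iff_left hdisj hv₁ hv₂ hw hμ).1 hwμ, le_rfl⟩, hc⟩
  · obtain ⟨hwv, hc⟩ := h.ancestor_cross hdisj hv₁ hv₂ hw hμ hwμ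
    exact ⟨hc, w, hwv, (h.symm.ancestor_iff_left hdisj.symm hv₂ hv₁ hw hu).1 hwu, le_rfl⟩

theorem isLCA_of_le (h : IsSplice T₁ v₁ T₂ v₂ T) (hdisj : Disjoint T₁.verts T₂.verts)
    (hv₁ : v₁ ∈ T₁.verts) (hv₂ : v₂ ∈ T₂.verts) (hμ : μ ∈ T₁.verts) (hu : u ∈ T₂.verts)
    (hs : IsLCA T₂ u v₂ s) (ha : IsLCA T₁ v₁ μ a) (has : a ≤ s) : IsLCA T u μ a := by
  have hau : Ancestor T a u :=
    (h.ancestor_of_mem_spine (mem_spine_of_ancestor_right hv₂ hs.2.1)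
      (mem_spine_of_ancestor_left hv₁ ha.1) has).trans
      (h.symm.ancestor_of_ancestor_left hdisj.symm hu hs.1)
  refine ⟨hau, h.ancestor_of_ancestor_left hdisj hμ ha.2.1, fun w hwu hwμ => ?_⟩
  obtain ⟨⟨c, hcv, hcμ, hwc⟩, -⟩ := h.exists_le_of_common_ancestor hdisj hv₁ hv₂ hμ hu hwμ hwu
  exact hwc.trans (ha.2.2 c hcv hcμ)

theorem isLCA_of_ge (h : IsSplice T₁ v₁ T₂ v₂ T) (hdisj : Disjoint T₁.verts T₂.verts)
    (hv₁ : v₁ ∈ T₁.verts) (hv₂ : v₂ ∈ T₂.verts) (hμ : μ ∈ T₁.verts) (hu : u ∈ T₂.verts)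
    (hs : IsLCA T₂ u v₂ s) (hcv : Ancestor T₁ c v₁) (hcμ : Ancestor T₁ c μ) (hsc : s ≤ c) :
    IsLCA T u μ s := by
  have hsμ : Ancestor T s μ :=
    (h.ancestor_of_mem_spine (mem_spine_of_ancestor_left hv₁ hcv)
      (mem_spine_of_ancestor_right hv₂ hs.2.1) hsc).trans
      (h.ancestor_of_ancestor_left hdisj hμ hcμ)
  refine ⟨h.symm.ancestor_of_ancestor_left hdisj.symm hu hs.1, hsμ, fun w hwu hwμ => ?_⟩
  obtain ⟨-, c', hc'v, hc'u, hwc'⟩ := h.exists_le_of_common_ancestor hdisj hv₁ hv₂ hμ hu hwμ hwu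
  exact hwc'.trans (hs.2.2 c' hc'u hc'v)

theorem depEdge_left (h : IsSplice T₁ v₁ T₂ v₂ T) (hdisj : Disjoint T₁.verts T₂.verts)
    (hv₁ : v₁ ∈ T₁.verts) (hv₂ : v₂ ∈ T₂.verts) (hy : y ∈ T₁.verts)
    (he : DepEdge π T₁ y B B') : DepEdge π T y B B' := by
  obtain ⟨hB, hB', hBT, hB'T, hne, hnot, a, haB', ha⟩ := he
  have hμ := hBT (B.max'_mem hne)
  exact ⟨hB, hB', hBT.trans h.verts_subset_left, hB'T.trans h.verts_subset_left, hne,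
    fun h' => hnot ((h.ancestor_iff_left hdisj hv₁ hv₂ hμ hy).1 h'), a, haB',
    h.isLCA_left hdisj hv₁ hv₂ hy hμ ha⟩

theorem depEdge_of_lt (h : IsSplice T₁ v₁ T₂ v₂ T) (hdisj : Disjoint T₁.verts T₂.verts)
    (hv₁ : v₁ ∈ T₁.verts) (hv₂ : v₂ ∈ T₂.verts) (h₁ : PiIncreasing π T₁) (hu : u ∈ T₂.verts)
    (hs : IsLCA T₂ u v₂ s) (hBs : Bs ∈ π) (hsBs : s ∈ Bs) (hBsT : Bs ⊆ T₂.verts)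
    (hB : B ∈ π) (hBT : B ⊆ T₁.verts) (hcB : c ∈ B) (hcv : Ancestor T₁ c v₁) (hsc : s < c) :
    DepEdge π T u B Bs := by
  have hcμ : c ≤ B.max' ⟨c, hcB⟩ := le_max' B c hcB
  have hμ : B.max' ⟨c, hcB⟩ ∈ T₁.verts := hBT (max'_mem _ _)
  have hnot : ¬Ancestor T (B.max' ⟨c, hcB⟩) u := fun hμu => by
    obtain ⟨-, c', hc'v, hc'u, hμc'⟩ := h.symm.ancestor_cross hdisj.symm hv₂ hv₁ hμ hu hμu
    exact (hsc.trans_le hcμ).not_ge (hμc'.trans (hs.2.2 c' hc'u hc'v))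
  exact ⟨hB, hBs, hBT.trans h.verts_subset_left, hBsT.trans h.symm.verts_subset_left,
    ⟨c, hcB⟩, hnot, s, hsBs, h.isLCA_of_ge hdisj hv₁ hv₂ hμ hu hs hcv
      (h₁.2 B hB hBT c hcB _ (max'_mem _ _) hcμ) hsc.le⟩

/-- An edge of `G_{v₁}(T₁)` whose root lies above `s` is not an edge of `G_u(T)`, but in `T`
both of its endpoints are joined to the block of `s`. -/
theorem eqvGen_of_depEdge_left (h : IsSplice T₁ v₁ T₂ v₂ T) (hdisj : Disjoint T₁.verts T₂.verts)
    (hv₁ : v₁ ∈ T₁.verts) (hv₂ : v₂ ∈ T₂.verts) (h₁ : PiIncreasing π T₁) (hu : u ∈ T₂.verts)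
    (hs : IsLCA T₂ u v₂ s) (hBs : Bs ∈ π) (hsBs : s ∈ Bs) (hBsT : Bs ⊆ T₂.verts)
    (he : DepEdge π T₁ v₁ B B') : EqvGen (DepEdge π T u) B B' := by
  obtain ⟨hB, hB', hBT, hB'T, hne, hnot, a, haB', ha⟩ := he
  have hμ := hBT (B.max'_mem hne)
  have hnot' : ¬Ancestor T (B.max' hne) u := fun hμu =>
    hnot (h.symm.ancestor_cross hdisj.symm hv₂ hv₁ hμ hu hμu).1
  have has : a ≠ s := fun has => disjoint_left.1 hdisj (ha.1.mem hv₁) (has ▸ hs.1.mem hu)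
  rcases has.lt_or_gt with has | hsa
  · exact .rel _ _ ⟨hB, hB', hBT.trans h.verts_subset_left, hB'T.trans h.verts_subset_left, hne,
      hnot', a, haB', h.isLCA_of_le hdisj hv₁ hv₂ hμ hu hs ha has.le⟩
  have hBBs : DepEdge π T u B Bs :=
    ⟨hB, hBs, hBT.trans h.verts_subset_left, hBsT.trans h.symm.verts_subset_left, hne, hnot',
      s, hsBs, h.isLCA_of_ge hdisj hv₁ hv₂ hμ hu hs ha.1 ha.2.1 hsa.le⟩
  have hB'Bs := h.depEdge_of_lt hdisj hv₁ hv₂ h₁ hu hs hBs hsBs hBsT hB' hB'T haB' ha.1 hsa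
  exact (EqvGen.rel _ _ hBBs).trans _ _ _ (EqvGen.rel _ _ hB'Bs).symm

end IsSplice

theorem splice_irreducible_general (π : Finset (Finset ℕ)) (T₁ T₂ T : ITree) (m₁ m₂ v₂ : ℕ)
    (hπ : IsPartition π) (h₁ : PiIncreasing π T₁) (h₂ : PiIncreasing π T₂)
    (hdisj : Disjoint T₁.verts T₂.verts)
    (hm₁ : m₁ ∈ T₁.verts)
    (hm₂ : m₂ ∈ T₂.verts)
    (hirr₁ : DepConnected π T₁ m₁) (hirr₂ : DepConnected π T₂ m₂)
    (hv₂ : v₂ ∈ T₂.verts) (hv₂lt : v₂ < m₁)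
    (hspl : IsSplice T₁ m₁ T₂ v₂ T) :
    DepConnected π T m₂ := by
  obtain ⟨s, hs⟩ := exists_isLCA hm₂ hv₂
  obtain ⟨Bs, hBs, hsBs, hBsT⟩ := h₂.1 s (hs.1.mem hm₂)
  obtain ⟨B₁, hB₁, hm₁B₁, hB₁T⟩ := h₁.1 m₁ hm₁
  have hB₁Bs : DepEdge π T m₂ B₁ Bs := hspl.depEdge_of_lt hdisj hm₁ hv₂ h₁ hm₂ hs hBs hsBs hBsT
    hB₁ hB₁T hm₁B₁ (Ancestor.refl T₁ m₁) ((hs.2.1.le hv₂).trans_lt hv₂lt)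
  refine depConnected_of_eqvGen (B₀ := Bs) fun B hB hBT => ?_
  rcases hπ.subset_or_subset h₁ h₂ hB (hspl.1 ▸ hBT) with hBT₁ | hBT₂
  · have hlift : EqvGen (DepEdge π T₁ m₁) ≤ EqvGen (DepEdge π T m₂) := EqvGen.eqvGen_le
      fun _ _ => hspl.eqvGen_of_depEdge_left hdisj hm₁ hv₂ h₁ hm₂ hs hBs hsBs hBsT
    exact (hlift _ _ (hirr₁ B hB hBT₁ B₁ hB₁ hB₁T)).trans _ _ _ (.rel _ _ hB₁Bs)
  · exact EqvGen.mono (fun _ _ => hspl.symm.depEdge_left hdisj.symm hv₂ hm₁ hm₂) _ _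
      (hirr₂ B hB hBT₂ Bs hBs hBsT)

/-- **Lemma 3.5(b) of Féray–Goulden–Lascoux.**  Let `T₁`, `T₂` be irreducible
`π`-increasing trees with disjoint vertex sets and maximum vertices `m₁`,
`m₂`, and let `v₂` be a vertex of `T₂` with `v₂ < m₁ < m₂`.  Then
`T = splice(T₁, m₁; T₂, v₂)` is irreducible: its `m₂`-dependence graph is
connected (`m₂` being the maximum vertex of `T`). -/
theorem splice_irreducible (π : Finset (Finset ℕ)) (T₁ T₂ T : ITree) (m₁ m₂ v₂ : ℕ)
    (hπ : IsPartition π) (h₁ : PiIncreasing π T₁) (h₂ : PiIncreasing π T₂)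
    (hdisj : Disjoint T₁.verts T₂.verts)
    (hm₁ : m₁ ∈ T₁.verts) (hm₁max : ∀ u ∈ T₁.verts, u ≤ m₁)
    (hm₂ : m₂ ∈ T₂.verts) (hm₂max : ∀ u ∈ T₂.verts, u ≤ m₂)
    (hirr₁ : DepConnected π T₁ m₁) (hirr₂ : DepConnected π T₂ m₂)
    (hv₂ : v₂ ∈ T₂.verts) (hv₂lt : v₂ < m₁) (hm : m₁ < m₂)
    (hspl : IsSplice T₁ m₁ T₂ v₂ T) :
    DepConnected π T m₂ :=
  splice_irreducible_general π T₁ T₂ T m₁ m₂ v₂ hπ h₁ h₂ hdisj hm₁ hm₂ hirr₁ hirr₂ hv₂ hv₂lt hspl
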